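/- arXiv:1811.08474 — 4 statements merged into one kernel-verified Lean document; each statement's English description precedes it below -/
import Mathlib

section
/- Assume conditions (B1) and (B2). Then for each t there exists a constant C_t¹ > 0 such that for every ω and every a ∈ X_t(ω), the inequality |a_+| − ν_t|a_-| ≥ C_t¹|a| holds, where a_+ and a_- denote the componentwise positive and negative parts of a. -/
open Finset

noncomputable section

/-- `ℓ¹`-norm of a vector in `ℝ^m` (sum of absolute values of the coordinates). -/
def l1 {m : ℕ} (a : Fin m → ℝ) : ℝ := ∑ i, |a i|

/-- Positive part of a real number. -/
def pPart (x : ℝ) : ℝ := max x 0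

/-- Negative part of a real number. -/
def nPart (x : ℝ) : ℝ := max (-x) 0

/-- The cone `X_t(ω)` of admissible portfolios (margin requirement):
`Σ_i Λ⁺_{t,i} a⁺_i ≥ μ_t Σ_i Λ⁻_{t,i} a⁻_i`.
Here `Lp, Lm` stand for `Λ⁺ = 1 - λ⁺` and `Λ⁻ = 1 + λ⁻`, and `marg` for the
margins `μ_t`. -/
def marketX {Ω : Type*} (m' : ℕ) (Lp Lm : ℕ → Ω → Fin m' → ℝ) (marg : ℕ → ℝ)
    (t : ℕ) (ω : Ω) : Set (Fin m' → ℝ) :=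
  {a | marg t * ∑ i, Lm t ω i * nPart (a i) ≤ ∑ i, Lp t ω i * pPart (a i)}

/-- The self-financing value
`ψ_t(ω, a, b) = Σ_i Λ⁺_{t,i}(R_{t,i}a_i - b_i)⁺ - Σ_i Λ⁻_{t,i}(R_{t,i}a_i - b_i)⁻`,
where `R` are the (gross) returns. -/
def marketPsi {Ω : Type*} (m' : ℕ) (Lp Lm R : ℕ → Ω → Fin m' → ℝ)
    (t : ℕ) (ω : Ω) (a b : Fin m' → ℝ) : ℝ :=
  ∑ i, Lp t ω i * pPart (R t ω i * a i - b i) -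
    ∑ i, Lm t ω i * nPart (R t ω i * a i - b i)

/-- The self-financing cone
`Z_t(ω) = {(a,b) ∈ X_{t-1}(ω) × X_t(ω) : ψ_t(ω,a,b) ≥ 0}`. -/
def marketZ {Ω : Type*} (m' : ℕ) (Lp Lm R : ℕ → Ω → Fin m' → ℝ) (marg : ℕ → ℝ)
    (t : ℕ) (ω : Ω) : Set ((Fin m' → ℝ) × (Fin m' → ℝ)) :=
  {q | q.1 ∈ marketX m' Lp Lm marg (t - 1) ω ∧ q.2 ∈ marketX m' Lp Lm marg t ω ∧
       0 ≤ marketPsi m' Lp Lm R t ω q.1 q.2}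

/-- The constant `ν_t = max{(Λ̄_{t+1} R̄_{t+1})/(Λ̲_{t+1} R̲_{t+1}), Λ̄_t/Λ̲_t}`. -/
def nuConst (Llo Lhi Rlo Rhi : ℕ → ℝ) (t : ℕ) : ℝ :=
  max ((Lhi (t + 1) * Rhi (t + 1)) / (Llo (t + 1) * Rlo (t + 1))) (Lhi t / Llo t)

/-- Structural conditions on the market data coming from the definitions
`Λ⁺ = 1 - λ⁺` with `0 ≤ λ⁺ < 1`, `Λ⁻ = 1 + λ⁻` with `λ⁻ ≥ 0`, and
`R = S_t/S_{t-1}` with positive prices. -/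
def MarketStruct {Ω : Type*} (m' : ℕ) (Lp Lm R : ℕ → Ω → Fin m' → ℝ) : Prop :=
  ∀ t ω i, 0 < Lp t ω i ∧ Lp t ω i ≤ 1 ∧ 1 ≤ Lm t ω i ∧ 0 < R t ω i

/-- Condition (B1): uniform bounds `0 < R̲_t ≤ R_{t,i}(ω) ≤ R̄_t`,
`0 < Λ̲_t ≤ Λ⁺_{t,i}(ω)` and `Λ⁻_{t,i}(ω) ≤ Λ̄_t`. -/
def MarketB1 {Ω : Type*} (m' : ℕ) (Lp Lm R : ℕ → Ω → Fin m' → ℝ)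
    (Llo Lhi Rlo Rhi : ℕ → ℝ) : Prop :=
  ∀ t, 0 < Rlo t ∧ 0 < Llo t ∧
    ∀ ω i, Rlo t ≤ R t ω i ∧ R t ω i ≤ Rhi t ∧ Llo t ≤ Lp t ω i ∧ Lm t ω i ≤ Lhi t

/-- Condition (B2): `μ_t > ν_t` for each `t`. -/
def MarketB2 (Llo Lhi Rlo Rhi marg : ℕ → ℝ) : Prop :=
  ∀ t, nuConst Llo Lhi Rlo Rhi t < marg t

/-- **Lemma (a)** of Section 6: under (B1) and (B2), for each `t` there is a constant
`C_t¹ > 0` with `|a₊| - ν_t |a₋| ≥ C_t¹ |a|` for every `ω` and every `a ∈ X_t(ω)`. -/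
theorem market_X_l1_bound
    {Ω : Type*} (m' : ℕ) (Lp Lm R : ℕ → Ω → Fin m' → ℝ)
    (marg Llo Lhi Rlo Rhi : ℕ → ℝ)
    (hstruct : MarketStruct m' Lp Lm R)
    (hmarg : ∀ t, 1 < marg t)
    (hB1 : MarketB1 m' Lp Lm R Llo Lhi Rlo Rhi)
    (hB2 : MarketB2 Llo Lhi Rlo Rhi marg) :
    ∀ t, ∃ C : ℝ, 0 < C ∧ ∀ ω, ∀ a ∈ marketX m' Lp Lm marg t ω,
      C * l1 a ≤ (∑ i, pPart (a i)) - nuConst Llo Lhi Rlo Rhi t * ∑ i, nPart (a i) := by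
  intro t
  set ν := nuConst Llo Lhi Rlo Rhi t with hνdef
  have hμ1 := hmarg t
  have hμν := hB2 t
  have hμ0 : (0:ℝ) < marg t := by linarith
  refine ⟨min ((marg t - ν)/(2*marg t)) (1/2), ?_, ?_⟩
  · exact lt_min (div_pos (by linarith) (by linarith)) (by norm_num)
  · intro ω a ha
    have hP : 0 ≤ ∑ i, pPart (a i) :=
      Finset.sum_nonneg fun i _ => le_max_right _ _
    have hN : 0 ≤ ∑ i, nPart (a i) :=
      Finset.sum_nonneg fun i _ => le_max_right _ _
    have h1 : ∑ i, nPart (a i) ≤ ∑ i, Lm t ω i * nPart (a i) := by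
      apply Finset.sum_le_sum; intro i _
      have h := (hstruct t ω i).2.2.1
      have hn : (0:ℝ) ≤ nPart (a i) := le_max_right _ _
      nlinarith [mul_nonneg (by linarith : (0:ℝ) ≤ Lm t ω i - 1) hn]
    have h2 : ∑ i, Lp t ω i * pPart (a i) ≤ ∑ i, pPart (a i) := by
      apply Finset.sum_le_sum; intro i _
      have h := hstruct t ω i
      have hp : (0:ℝ) ≤ pPart (a i) := le_max_right _ _
      nlinarith [mul_nonneg (by linarith [h.2.1] : (0:ℝ) ≤ 1 - Lp t ω i) hp]
    have hXa : marg t * ∑ i, Lm t ω i * nPart (a i) ≤ ∑ i, Lp t ω i * pPart (a i) := ha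
    have key : marg t * ∑ i, nPart (a i) ≤ ∑ i, pPart (a i) := by nlinarith
    have hl1 : l1 a = (∑ i, pPart (a i)) + ∑ i, nPart (a i) := by
      unfold l1
      rw [← Finset.sum_add_distrib]
      refine Finset.sum_congr rfl fun i _ => ?_
      unfold pPart nPart
      rcases le_total (a i) 0 with h | h
      · rw [abs_of_nonpos h, max_eq_right h, max_eq_left (by linarith)]; ring
      · rw [abs_of_nonneg h, max_eq_left h, max_eq_right (by linarith)]; ring
    rw [hl1]
    set P := ∑ i, pPart (a i)
    set N := ∑ i, nPart (a i)
    rcases le_total 0 ν with hν0 | hν0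
    · have hC : min ((marg t - ν)/(2*marg t)) (1/2) ≤ (marg t - ν)/(2*marg t) :=
        min_le_left _ _
      have h3 : (marg t - ν)/(2*marg t) * (P + N) ≤ P - ν * N := by
        rw [div_mul_eq_mul_div, div_le_iff₀ (by linarith)]
        nlinarith [mul_nonneg hν0 (by linarith : (0:ℝ) ≤ P - marg t * N),
          mul_nonneg hμ0.le (by linarith : (0:ℝ) ≤ P - marg t * N),
          mul_nonneg hN (mul_nonneg (by linarith : (0:ℝ) ≤ marg t - 1)
            (by rw [hνdef] at *; linarith : (0:ℝ) ≤ marg t - ν))]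
      nlinarith
    · have hC : min ((marg t - ν)/(2*marg t)) (1/2) ≤ (1:ℝ)/2 := min_le_right _ _
      have h3 : (1:ℝ)/2 * (P + N) ≤ P - ν * N := by nlinarith
      nlinarith
end
end

section
/- Assume conditions (B1) and (B2). Then for each t ∈ {1,…,N} there exists a constant C_t² > 0 such that for every ω, if a ∈ X_{t−1}(ω), b ∈ X_t(ω) and |b| ≤ C_t²|a|, then (a,b) ∈ Z_t(ω). -/
open Finset

noncomputable section

lemma pPart_nonneg' (x : ℝ) : 0 ≤ pPart x := le_max_right _ _
lemma nPart_nonneg' (x : ℝ) : 0 ≤ nPart x := le_max_right _ _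

lemma abs_eq_pPart_add_nPart (x : ℝ) : |x| = pPart x + nPart x := by
  rcases le_total 0 x with h | h
  · simp [pPart, nPart, abs_of_nonneg h, max_eq_left h, max_eq_right (neg_nonpos_of_nonneg h)]
  · simp [pPart, nPart, abs_of_nonpos h, max_eq_right h, max_eq_left (neg_nonneg_of_nonpos h)]

lemma pPart_sub_ge (x y : ℝ) : pPart x - |y| ≤ pPart (x - y) := by
  rcases max_cases x 0 with ⟨h1, h2⟩ | ⟨h1, h2⟩ <;> simp only [pPart, h1] <;>
    linarith [le_max_left (x - y) 0, le_max_right (x - y) 0, abs_nonneg y, le_abs_self y]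

lemma nPart_sub_le (x y : ℝ) : nPart (x - y) ≤ nPart x + |y| := by
  rcases max_cases (-(x - y)) 0 with ⟨h3, h4⟩ | ⟨h3, h4⟩ <;> simp only [nPart, h3] <;>
    linarith [le_max_left (-x) 0, le_max_right (-x) 0, abs_nonneg y, le_abs_self y]

lemma pPart_mul' (r x : ℝ) (hr : 0 ≤ r) : pPart (r * x) = r * pPart x := by
  simp only [pPart]
  rw [mul_max_of_nonneg x 0 hr, mul_zero]

lemma nPart_mul' (r x : ℝ) (hr : 0 ≤ r) : nPart (r * x) = r * nPart x := by
  simp only [nPart, ← mul_neg]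
  rw [mul_max_of_nonneg (-x) 0 hr, mul_zero]

/-- **Lemma (b)** of Section 6: under (B1) and (B2), for each `t ∈ {1, …, N}` there is a
constant `C_t² > 0` such that if `a ∈ X_{t-1}(ω)`, `b ∈ X_t(ω)` and `|b| ≤ C_t²|a|`,
then `(a, b) ∈ Z_t(ω)`. -/
theorem market_Z_contains_small_portfolios
    {Ω : Type*} (m' N : ℕ) (Lp Lm R : ℕ → Ω → Fin m' → ℝ)
    (marg Llo Lhi Rlo Rhi : ℕ → ℝ)
    (hstruct : MarketStruct m' Lp Lm R)
    (hmarg : ∀ t, 1 < marg t)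
    (hB1 : MarketB1 m' Lp Lm R Llo Lhi Rlo Rhi)
    (hB2 : MarketB2 Llo Lhi Rlo Rhi marg) :
    ∀ t, 1 ≤ t → t ≤ N → ∃ C : ℝ, 0 < C ∧
      ∀ ω (a b : Fin m' → ℝ), a ∈ marketX m' Lp Lm marg (t - 1) ω →
        b ∈ marketX m' Lp Lm marg t ω → l1 b ≤ C * l1 a →
        (a, b) ∈ marketZ m' Lp Lm R marg t ω := by
  intro t ht _
  obtain ⟨hRlo_t, hLlo_t, hB1t⟩ := hB1 t
  have htt : t - 1 + 1 = t := by omega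
  have hmargpos : (0:ℝ) < marg (t - 1) := lt_trans one_pos (hmarg (t - 1))
  have hnu1 : Lhi t * Rhi t / (Llo t * Rlo t) < marg (t - 1) := by
    have h := hB2 (t - 1)
    rw [nuConst, htt] at h
    exact lt_of_le_of_lt (le_max_left _ _) h
  have hdenpos : 0 < Llo t * Rlo t := mul_pos hLlo_t hRlo_t
  have hLR : Lhi t * Rhi t < marg (t - 1) * (Llo t * Rlo t) := by
    rw [div_lt_iff₀ hdenpos] at hnu1; linarith
  set c : ℝ := Llo t * Rlo t - Lhi t * Rhi t / marg (t - 1) with hc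
  have hcpos : 0 < c := by
    have h : Lhi t * Rhi t / marg (t - 1) < Llo t * Rlo t := by
      rw [div_lt_iff₀ hmargpos]; nlinarith
    simp only [hc]; linarith
  set D : ℝ := max (Lhi t) 1 + 1 with hD
  have hmax1 : (1:ℝ) ≤ max (Lhi t) 1 := le_max_right _ _
  have hDpos : 0 < D := by simp only [hD]; linarith
  refine ⟨c / (2 * D), by positivity, ?_⟩
  intro ω a b ha hb hab
  refine ⟨ha, hb, ?_⟩
  show 0 ≤ marketPsi m' Lp Lm R t ω a b
  rcases Nat.eq_zero_or_pos m' with hm | hm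
  · subst hm
    simp [marketPsi]
  -- pointwise facts at ω
  have hBpos : 0 ≤ Lhi t * Rhi t := by
    obtain ⟨hLp0, hLp1, hLm1, hR0⟩ := hstruct t ω ⟨0, hm⟩
    obtain ⟨hRlo, hRhi, hLlo, hLhi⟩ := hB1t ω ⟨0, hm⟩
    nlinarith
  set Sp : ℝ := ∑ i, pPart (a i) with hSp
  set Sn : ℝ := ∑ i, nPart (a i) with hSn
  have hSp0 : 0 ≤ Sp := Finset.sum_nonneg fun i _ => pPart_nonneg' _
  have hSn0 : 0 ≤ Sn := Finset.sum_nonneg fun i _ => nPart_nonneg' _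
  -- constraint from a ∈ X_{t-1}
  have hconstr : marg (t - 1) * Sn ≤ Sp := by
    have hn1 : Sn ≤ ∑ i, Lm (t-1) ω i * nPart (a i) := Finset.sum_le_sum fun i _ =>
      le_mul_of_one_le_left (nPart_nonneg' _) (hstruct (t-1) ω i).2.2.1
    have hp1 : ∑ i, Lp (t-1) ω i * pPart (a i) ≤ Sp := Finset.sum_le_sum fun i _ =>
      mul_le_of_le_one_left (pPart_nonneg' _) (hstruct (t-1) ω i).2.1
    have h := ha
    simp only [marketX, Set.mem_setOf_eq] at h
    nlinarith
  have hl1a : l1 a = Sp + Sn := by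
    simp only [l1, hSp, hSn, ← Finset.sum_add_distrib]
    exact Finset.sum_congr rfl fun i _ => abs_eq_pPart_add_nPart _
  -- termwise estimate for psi
  have key : ∀ i : Fin m', Llo t * Rlo t * pPart (a i) - Lhi t * Rhi t * nPart (a i) - D * |b i|
      ≤ Lp t ω i * pPart (R t ω i * a i - b i) - Lm t ω i * nPart (R t ω i * a i - b i) := by
    intro i
    obtain ⟨hLp0, hLp1, hLm1, hR0⟩ := hstruct t ω i
    obtain ⟨hRlo, hRhi, hLlo, hLhi⟩ := hB1t ω i
    have pA := pPart_nonneg' (a i)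
    have nA := nPart_nonneg' (a i)
    have hb0 := abs_nonneg (b i)
    have h1 : pPart (R t ω i * a i) - |b i| ≤ pPart (R t ω i * a i - b i) := pPart_sub_ge _ _
    have h2 : nPart (R t ω i * a i - b i) ≤ nPart (R t ω i * a i) + |b i| := nPart_sub_le _ _
    rw [pPart_mul' _ _ hR0.le] at h1
    rw [nPart_mul' _ _ hR0.le] at h2
    have e1 : Lp t ω i * (R t ω i * pPart (a i) - |b i|) ≤
        Lp t ω i * pPart (R t ω i * a i - b i) := mul_le_mul_of_nonneg_left h1 hLp0.le
    have e2 : Lm t ω i * nPart (R t ω i * a i - b i) ≤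
        Lm t ω i * (R t ω i * nPart (a i) + |b i|) :=
      mul_le_mul_of_nonneg_left h2 (by linarith)
    rw [mul_sub] at e1
    rw [mul_add] at e2
    have e3 : Llo t * Rlo t * pPart (a i) ≤ Lp t ω i * (R t ω i * pPart (a i)) := by
      have h : Llo t * Rlo t ≤ Lp t ω i * R t ω i := mul_le_mul hLlo hRlo hRlo_t.le hLp0.le
      calc Llo t * Rlo t * pPart (a i) ≤ Lp t ω i * R t ω i * pPart (a i) :=
            mul_le_mul_of_nonneg_right h pA
        _ = Lp t ω i * (R t ω i * pPart (a i)) := mul_assoc _ _ _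
    have e4 : Lm t ω i * (R t ω i * nPart (a i)) ≤ Lhi t * Rhi t * nPart (a i) := by
      have h : Lm t ω i * R t ω i ≤ Lhi t * Rhi t := mul_le_mul hLhi hRhi hR0.le (by linarith)
      calc Lm t ω i * (R t ω i * nPart (a i)) = Lm t ω i * R t ω i * nPart (a i) :=
            (mul_assoc _ _ _).symm
        _ ≤ Lhi t * Rhi t * nPart (a i) := mul_le_mul_of_nonneg_right h nA
    have e5 : Lp t ω i * |b i| ≤ 1 * |b i| := mul_le_mul_of_nonneg_right hLp1 hb0
    have e6 : Lm t ω i * |b i| ≤ max (Lhi t) 1 * |b i| :=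
      mul_le_mul_of_nonneg_right (le_trans hLhi (le_max_left _ _)) hb0
    have hDexp : D * |b i| = max (Lhi t) 1 * |b i| + 1 * |b i| := by
      simp only [hD]; ring
    linarith [e1, e2, e3, e4, e5, e6]
  have hsum : Llo t * Rlo t * Sp - Lhi t * Rhi t * Sn - D * l1 b ≤
      marketPsi m' Lp Lm R t ω a b := by
    have h := Finset.sum_le_sum (fun i (_ : i ∈ Finset.univ) => key i)
    simp only [marketPsi, ← Finset.sum_sub_distrib]
    calc Llo t * Rlo t * Sp - Lhi t * Rhi t * Sn - D * l1 b
        = ∑ i, (Llo t * Rlo t * pPart (a i) - Lhi t * Rhi t * nPart (a i) - D * |b i|) := by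
          simp only [hSp, hSn, l1, Finset.mul_sum, ← Finset.sum_sub_distrib]
      _ ≤ _ := h
  -- final combination
  have hSb : l1 b ≤ c / (2 * D) * (Sp + Sn) := by rw [← hl1a]; exact hab
  have hSnSp : Sn ≤ Sp := by
    nlinarith [mul_nonneg (by linarith [hmarg (t-1)] : (0:ℝ) ≤ marg (t - 1) - 1) hSn0]
  have h6 : D * l1 b ≤ c / 2 * (Sp + Sn) := by
    have h := mul_le_mul_of_nonneg_left hSb hDpos.le
    have he : D * (c / (2 * D) * (Sp + Sn)) = c / 2 * (Sp + Sn) := by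
      field_simp
    linarith [he ▸ h]
  have hBSn : Lhi t * Rhi t * Sn ≤ Lhi t * Rhi t / marg (t - 1) * Sp := by
    rw [div_mul_eq_mul_div, le_div_iff₀ hmargpos]
    nlinarith [mul_le_mul_of_nonneg_left hconstr hBpos]
  have hid : Lhi t * Rhi t / marg (t - 1) * Sp = Llo t * Rlo t * Sp - c * Sp := by
    simp only [hc]; ring
  have hq1 : c * Sp = c / 2 * Sp + c / 2 * Sp := by ring
  have hq2 : c / 2 * (Sp + Sn) = c / 2 * Sp + c / 2 * Sn := by ring
  have hq3 : c / 2 * Sn ≤ c / 2 * Sp := mul_le_mul_of_nonneg_left hSnSp (half_pos hcpos).le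
  clear_value c D Sp Sn
  linarith [hsum, h6, hBSn, hid, hq1, hq2, hq3]
end
end

section
/- Assume conditions (B1) and (B2). Then for each t ∈ {1,…,N} there exists a constant K_t such that |b| ≤ K_t|a| for every (a,b) ∈ Z_t(ω) and every ω; one may take K_t = 2Λ̄_t R̄_t / (C_t¹ Λ̲_t), where C_t¹ > 0 is any constant satisfying |b_+| − ν_t|b_-| ≥ C_t¹|b| for all b ∈ X_t(ω). -/
open Finset

noncomputable section

lemma pPart_add_nPart' (x : ℝ) : pPart x + nPart x = |x| := by
  unfold pPart nPart
  rcases le_total x 0 with h | h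
  · rw [max_eq_right h, max_eq_left (by linarith), abs_of_nonpos h]; ring
  · rw [max_eq_left h, max_eq_right (by linarith), abs_of_nonneg h]; ring

lemma pPart_sub_le' (c d : ℝ) : pPart (c - d) ≤ pPart c + nPart d := by
  unfold pPart nPart
  apply max_le
  · have h1 : c ≤ max c 0 := le_max_left _ _
    have h2 : -d ≤ max (-d) 0 := le_max_left _ _
    linarith
  · have h1 : (0:ℝ) ≤ max c 0 := le_max_right _ _
    have h2 : (0:ℝ) ≤ max (-d) 0 := le_max_right _ _
    linarith

lemma pPart_mul_le' (r rhi c : ℝ) (hr : 0 ≤ r) (hrhi : r ≤ rhi) :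
    pPart (r * c) ≤ rhi * |c| := by
  unfold pPart
  apply max_le
  · rcases le_total c 0 with h | h
    · have : r * c ≤ 0 := mul_nonpos_of_nonneg_of_nonpos hr h
      have : 0 ≤ rhi * |c| := mul_nonneg (le_trans hr hrhi) (abs_nonneg _)
      linarith
    · rw [abs_of_nonneg h]
      exact mul_le_mul_of_nonneg_right hrhi h
  · exact mul_nonneg (le_trans hr hrhi) (abs_nonneg _)

/-- Verification of (A3) for the market model: under (B1) and (B2), for each
`t ∈ {1, …, N}` there is a constant `K_t` with `|b| ≤ K_t|a|` for all
`(a,b) ∈ Z_t(ω)`; one may take `K_t = 2Λ̄_t R̄_t/(C_t¹ Λ̲_t)` for any constant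
`C_t¹ > 0` satisfying `|b₊| - ν_t|b₋| ≥ C_t¹|b|` on `X_t(ω)`. -/
theorem market_Z_growth_bound
    {Ω : Type*} (m' N : ℕ) (Lp Lm R : ℕ → Ω → Fin m' → ℝ)
    (marg Llo Lhi Rlo Rhi : ℕ → ℝ)
    (hstruct : MarketStruct m' Lp Lm R)
    (hmarg : ∀ t, 1 < marg t)
    (hB1 : MarketB1 m' Lp Lm R Llo Lhi Rlo Rhi)
    (hB2 : MarketB2 Llo Lhi Rlo Rhi marg) :
    ∀ t, 1 ≤ t → t ≤ N →
      (∃ K : ℝ, ∀ ω, ∀ ab ∈ marketZ m' Lp Lm R marg t ω, l1 ab.2 ≤ K * l1 ab.1) ∧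
      (∀ C1 : ℝ, 0 < C1 →
        (∀ ω, ∀ b ∈ marketX m' Lp Lm marg t ω,
          C1 * l1 b ≤ (∑ i, pPart (b i)) - nuConst Llo Lhi Rlo Rhi t * ∑ i, nPart (b i)) →
        ∀ ω, ∀ ab ∈ marketZ m' Lp Lm R marg t ω,
          l1 ab.2 ≤ (2 * Lhi t * Rhi t / (C1 * Llo t)) * l1 ab.1) := by
  intro t ht htN
  have main : ∀ C1 : ℝ, 0 < C1 →
      (∀ ω, ∀ b ∈ marketX m' Lp Lm marg t ω,
        C1 * l1 b ≤ (∑ i, pPart (b i)) - nuConst Llo Lhi Rlo Rhi t * ∑ i, nPart (b i)) →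
      ∀ ω, ∀ ab ∈ marketZ m' Lp Lm R marg t ω,
        l1 ab.2 ≤ (2 * Lhi t * Rhi t / (C1 * Llo t)) * l1 ab.1 := by
    intro C1 hC1 hC ω ab hab
    rcases Nat.eq_zero_or_pos m' with hm | hm
    · subst hm; simp [l1]
    · obtain ⟨ha, hbX, hpsi⟩ := hab
      obtain ⟨hRlo, hLlo, hbd⟩ := hB1 t
      set i0 : Fin m' := ⟨0, hm⟩
      obtain ⟨hLp0, hLp1, hLm1, hR0⟩ := hstruct t ω i0
      obtain ⟨hRl0, hRh0, hLl0, hLh0⟩ := hbd ω i0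
      have hLloLhi : Llo t ≤ Lhi t := by linarith
      have hRhi : 0 < Rhi t := lt_of_lt_of_le (lt_of_lt_of_le hRlo hRl0) hRh0
      have hν1 : 1 ≤ nuConst Llo Lhi Rlo Rhi t := by
        refine le_trans ?_ (le_max_right _ _)
        rw [le_div_iff₀ hLlo]; linarith
      -- notation
      have hQxPx : ∑ i, nPart (R t ω i * ab.1 i - ab.2 i)
          ≤ ∑ i, pPart (R t ω i * ab.1 i - ab.2 i) := by
        have h2 : ∑ i, nPart (R t ω i * ab.1 i - ab.2 i)
            ≤ ∑ i, Lm t ω i * nPart (R t ω i * ab.1 i - ab.2 i) :=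
          Finset.sum_le_sum fun i _ =>
            le_mul_of_one_le_left (nPart_nonneg' _) (hstruct t ω i).2.2.1
        have h3 : ∑ i, Lp t ω i * pPart (R t ω i * ab.1 i - ab.2 i)
            ≤ ∑ i, pPart (R t ω i * ab.1 i - ab.2 i) :=
          Finset.sum_le_sum fun i _ =>
            mul_le_of_le_one_left (pPart_nonneg' _) (hstruct t ω i).2.1
        simp only [marketPsi] at hpsi
        linarith
      have hPx : ∑ i, pPart (R t ω i * ab.1 i - ab.2 i)
          ≤ Rhi t * l1 ab.1 + ∑ i, nPart (ab.2 i) := by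
        have h : ∀ i ∈ Finset.univ (α := Fin m'),
            pPart (R t ω i * ab.1 i - ab.2 i) ≤ Rhi t * |ab.1 i| + nPart (ab.2 i) := by
          intro i _
          have h1 := pPart_sub_le' (R t ω i * ab.1 i) (ab.2 i)
          have h2 := pPart_mul_le' (R t ω i) (Rhi t) (ab.1 i)
            (le_of_lt (hstruct t ω i).2.2.2) (hbd ω i).2.1
          linarith
        calc ∑ i, pPart (R t ω i * ab.1 i - ab.2 i)
            ≤ ∑ i, (Rhi t * |ab.1 i| + nPart (ab.2 i)) := Finset.sum_le_sum h
          _ = Rhi t * l1 ab.1 + ∑ i, nPart (ab.2 i) := by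
              rw [Finset.sum_add_distrib, ← Finset.mul_sum]; rfl
      have hPb : ∑ i, pPart (ab.2 i)
          ≤ Rhi t * l1 ab.1 + ∑ i, nPart (R t ω i * ab.1 i - ab.2 i) := by
        have h : ∀ i ∈ Finset.univ (α := Fin m'),
            pPart (ab.2 i) ≤ Rhi t * |ab.1 i| + nPart (R t ω i * ab.1 i - ab.2 i) := by
          intro i _
          have h1 := pPart_sub_le' (R t ω i * ab.1 i) (R t ω i * ab.1 i - ab.2 i)
          rw [show R t ω i * ab.1 i - (R t ω i * ab.1 i - ab.2 i) = ab.2 i from by ring] at h1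
          have h2 := pPart_mul_le' (R t ω i) (Rhi t) (ab.1 i)
            (le_of_lt (hstruct t ω i).2.2.2) (hbd ω i).2.1
          linarith
        calc ∑ i, pPart (ab.2 i)
            ≤ ∑ i, (Rhi t * |ab.1 i| + nPart (R t ω i * ab.1 i - ab.2 i)) :=
              Finset.sum_le_sum h
          _ = Rhi t * l1 ab.1 + ∑ i, nPart (R t ω i * ab.1 i - ab.2 i) := by
              rw [Finset.sum_add_distrib, ← Finset.mul_sum]; rfl
      have hQb : (0:ℝ) ≤ ∑ i, nPart (ab.2 i) :=
        Finset.sum_nonneg fun i _ => nPart_nonneg' _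
      have hl1a : 0 ≤ l1 ab.1 := Finset.sum_nonneg fun i _ => abs_nonneg _
      have hCb := hC ω ab.2 hbX
      have key : C1 * l1 ab.2 ≤ 2 * Rhi t * l1 ab.1 := by
        nlinarith [mul_nonneg (sub_nonneg.2 hν1) hQb]
      rw [div_mul_eq_mul_div, le_div_iff₀ (mul_pos hC1 hLlo)]
      nlinarith [mul_le_mul_of_nonneg_right key (le_of_lt hLlo),
        mul_le_mul_of_nonneg_right (mul_le_mul_of_nonneg_right hLloLhi hRhi.le)
          (mul_nonneg (by norm_num : (0:ℝ) ≤ 2) hl1a)]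
  refine ⟨?_, main⟩
  set ν := nuConst Llo Lhi Rlo Rhi t with hνdef
  have hνμ : ν < marg t := hB2 t
  have hμ1 : 1 < marg t := hmarg t
  set C1 := (marg t - ν) / (marg t + 1) with hC1def
  have hC1 : 0 < C1 := div_pos (by linarith) (by linarith)
  refine ⟨2 * Lhi t * Rhi t / (C1 * Llo t), main C1 hC1 ?_⟩
  intro ω b hb
  rcases Nat.eq_zero_or_pos m' with hm | hm
  · subst hm; simp [l1]
  · set i0 : Fin m' := ⟨0, hm⟩
    obtain ⟨hRlo, hLlo, hbd⟩ := hB1 t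
    obtain ⟨hLp0, hLp1, hLm1, hR0⟩ := hstruct t ω i0
    obtain ⟨hRl0, hRh0, hLl0, hLh0⟩ := hbd ω i0
    have hν1 : 1 ≤ ν := by
      rw [hνdef]
      refine le_trans ?_ (le_max_right _ _)
      rw [le_div_iff₀ hLlo]; linarith
    have hP : (0:ℝ) ≤ ∑ i, pPart (b i) := Finset.sum_nonneg fun i _ => pPart_nonneg' _
    have hQ : (0:ℝ) ≤ ∑ i, nPart (b i) := Finset.sum_nonneg fun i _ => nPart_nonneg' _
    have hPQ : marg t * ∑ i, nPart (b i) ≤ ∑ i, pPart (b i) := by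
      have h2 : ∑ i, nPart (b i) ≤ ∑ i, Lm t ω i * nPart (b i) :=
        Finset.sum_le_sum fun i _ =>
          le_mul_of_one_le_left (nPart_nonneg' _) (hstruct t ω i).2.2.1
      have h3 : ∑ i, Lp t ω i * pPart (b i) ≤ ∑ i, pPart (b i) :=
        Finset.sum_le_sum fun i _ =>
          mul_le_of_le_one_left (pPart_nonneg' _) (hstruct t ω i).2.1
      have hb' := hb
      simp only [marketX, Set.mem_setOf_eq] at hb'
      nlinarith [mul_le_mul_of_nonneg_left h2 (by linarith : (0:ℝ) ≤ marg t)]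
    have hl1 : l1 b = (∑ i, pPart (b i)) + ∑ i, nPart (b i) := by
      rw [l1, ← Finset.sum_add_distrib]
      exact Finset.sum_congr rfl fun i _ => (pPart_add_nPart' _).symm
    rw [hl1, hC1def, div_mul_eq_mul_div, div_le_iff₀ (by linarith : (0:ℝ) < marg t + 1)]
    nlinarith [mul_le_mul_of_nonneg_right hPQ (by linarith : (0:ℝ) ≤ 1 + ν)]
end
end

section
/- Assume conditions (B1) and (B2). Let x̊ := (1,…,1) ∈ ℝ^m and ẙ_t := (C_t²/2) x̊, where C_t² > 0 is a constant such that a ∈ X_{t−1}(ω), b ∈ X_t(ω) and |b| ≤ C_t²|a| imply (a,b) ∈ Z_t(ω). Then for each t ∈ {1,…,N}: (x̊, ẙ_t) ∈ Z_t(ω) for all ω, and there exists a constant δ_t > 0 such that the closed ball B((x̊, ẙ_t), δ_t) in ℝ^{2m} is contained in X_{t−1}(ω) × X_t(ω) for all ω. -/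
open Finset

noncomputable section

lemma marketX_of_nonneg {Ω : Type*} (m' : ℕ) (Lp Lm : ℕ → Ω → Fin m' → ℝ)
    (marg : ℕ → ℝ) (t : ℕ) (ω : Ω) (hLp : ∀ i, 0 ≤ Lp t ω i)
    (a : Fin m' → ℝ) (ha : ∀ i, 0 ≤ a i) : a ∈ marketX m' Lp Lm marg t ω := by
  have h1 : ∀ i, nPart (a i) = 0 := fun i => by
    simp [nPart, max_eq_right, neg_nonpos.mpr (ha i)]
  have h2 : (∑ i, Lm t ω i * nPart (a i)) = 0 := by
    simp [h1]
  simp only [marketX, Set.mem_setOf_eq, h2, mul_zero]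
  exact Finset.sum_nonneg fun i _ => mul_nonneg (hLp i) (le_max_right _ _)

/-- Verification of (A4) for the market model: under (B1) and (B2), with
`x̊ = (1, …, 1)` and `ẙ_t = (C_t²/2) x̊` (where `C_t² > 0` is as in Lemma (b)),
the pair `(x̊, ẙ_t)` lies in `Z_t(ω)` for all `ω`, and some closed ball around
`(x̊, ẙ_t)` in `ℝ^{2m}` is contained in `X_{t-1}(ω) × X_t(ω)` for all `ω`. -/
theorem market_interior_point_of_Z
    {Ω : Type*} (m' N : ℕ) (Lp Lm R : ℕ → Ω → Fin m' → ℝ)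
    (marg Llo Lhi Rlo Rhi : ℕ → ℝ)
    (hstruct : MarketStruct m' Lp Lm R)
    (hmarg : ∀ t, 1 < marg t)
    (hB1 : MarketB1 m' Lp Lm R Llo Lhi Rlo Rhi)
    (hB2 : MarketB2 Llo Lhi Rlo Rhi marg) :
    ∀ t, 1 ≤ t → t ≤ N → ∀ C2 : ℝ, 0 < C2 →
      (∀ ω (a b : Fin m' → ℝ), a ∈ marketX m' Lp Lm marg (t - 1) ω →
        b ∈ marketX m' Lp Lm marg t ω → l1 b ≤ C2 * l1 a →
        (a, b) ∈ marketZ m' Lp Lm R marg t ω) →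
      (∀ ω, ((fun _ => 1, fun _ => C2 / 2) : (Fin m' → ℝ) × (Fin m' → ℝ)) ∈
        marketZ m' Lp Lm R marg t ω) ∧
      ∃ δ : ℝ, 0 < δ ∧ ∀ ω (q : (Fin m' → ℝ) × (Fin m' → ℝ)),
        l1 (q.1 - fun _ => 1) + l1 (q.2 - fun _ => C2 / 2) ≤ δ →
        q.1 ∈ marketX m' Lp Lm marg (t - 1) ω ∧ q.2 ∈ marketX m' Lp Lm marg t ω := by
  intro t ht1 htN C2 hC2 hlem
  have hx : ∀ (s : ℕ) (ω : Ω), (fun _ => (1:ℝ)) ∈ marketX m' Lp Lm marg s ω := fun s ω =>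
    marketX_of_nonneg m' Lp Lm marg s ω (fun i => (hstruct s ω i).1.le) _ (fun _ => zero_le_one)
  have hy : ∀ (ω : Ω), (fun _ => C2 / 2) ∈ marketX m' Lp Lm marg t ω := fun ω =>
    marketX_of_nonneg m' Lp Lm marg t ω (fun i => (hstruct t ω i).1.le) _
      (fun _ => by positivity)
  have hl1x : l1 (fun _ : Fin m' => (1:ℝ)) = m' := by simp [l1]
  have hl1y : l1 (fun _ : Fin m' => C2 / 2) = (C2 / 2) * m' := by
    simp [l1, abs_of_nonneg (by positivity : (0:ℝ) ≤ C2 / 2), mul_comm]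
  constructor
  · intro ω
    exact hlem ω _ _ (hx _ ω) (hy ω) (by rw [hl1x, hl1y]; nlinarith [Nat.cast_nonneg (α := ℝ) m'])
  · refine ⟨min (1/2) (C2/4), by positivity, fun ω q hq => ?_⟩
    have hb : ∀ i, |q.1 i - 1| + |q.2 i - C2/2| ≤ min (1/2) (C2/4) := by
      intro i
      refine le_trans ?_ hq
      have h1 : |q.1 i - 1| ≤ l1 (q.1 - fun _ => 1) := by
        unfold l1
        have := Finset.single_le_sum (f := fun j : Fin m' => |q.1 j - (1:ℝ)|)
          (fun j _ => abs_nonneg _) (Finset.mem_univ i)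
        simpa [Pi.sub_apply] using this
      have h2 : |q.2 i - C2/2| ≤ l1 (q.2 - fun _ => C2/2) := by
        unfold l1
        have := Finset.single_le_sum (f := fun j : Fin m' => |q.2 j - C2/2|)
          (fun j _ => abs_nonneg _) (Finset.mem_univ i)
        simpa [Pi.sub_apply] using this
      linarith
    constructor
    · refine marketX_of_nonneg m' Lp Lm marg _ ω (fun i => (hstruct _ ω i).1.le) _ (fun i => ?_)
      have := hb i
      have h1 := abs_le.mp (le_trans (le_add_of_nonneg_right (abs_nonneg _))
        (le_trans this (min_le_left _ _)))
      linarith [h1.1]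
    · refine marketX_of_nonneg m' Lp Lm marg _ ω (fun i => (hstruct _ ω i).1.le) _ (fun i => ?_)
      have := hb i
      have h1 := abs_le.mp (le_trans (le_add_of_nonneg_left (abs_nonneg _))
        (le_trans this (min_le_right _ _)))
      linarith [h1.1]
end
end
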